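/- arXiv:2110.13728 — 4 statements merged into one kernel-verified Lean document; each statement's English description precedes it below -/
import Mathlib

section
/- Let d ≥ 1 and let W : ℝ^{d×d} → ℝ be differentiable on GL₊(d) = {F ∈ ℝ^{d×d} : det F > 0} and frame indifferent, i.e. W(QF) = W(F) for every F ∈ GL₊(d) and every Q ∈ SO(d). Then for every F ∈ GL₊(d) the matrix F⁻¹ ∂_F W(F) (the second Piola–Kirchhoff stress tensor) is symmetric. -/
/-!
Let `G = ∂_F W(F)`. For skew `A`, the curve `t ↦ exp (t A) F` runs through `SO(d) F`, on which
`W` is constant, so differentiating at `t = 0` gives `G : A F = tr (F Gᵀ A) = 0`. A matrix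
orthogonal to all skew matrices is symmetric, so `F Gᵀ` is symmetric, and then so is
`F⁻¹ G = F⁻¹ (F Gᵀ) F⁻ᵀ`.
-/

open Matrix

attribute [local instance] Matrix.frobeniusNormedAddCommGroup Matrix.frobeniusNormedSpace

/-- Frobenius inner product `A : B = tr(Aᵀ B)`. -/
noncomputable def finner {d : ℕ} (A B : Matrix (Fin d) (Fin d) ℝ) : ℝ := (Aᵀ * B).trace

/-- The continuous linear functional `Z ↦ G : Z`. -/
noncomputable def frobCLM {d : ℕ} (G : Matrix (Fin d) (Fin d) ℝ) :
    Matrix (Fin d) (Fin d) ℝ →L[ℝ] ℝ :=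
  LinearMap.toContinuousLinearMap
    { toFun := fun Z => finner G Z
      map_add' := by intro a b; simp [finner, Matrix.mul_add]
      map_smul' := by intro c a; simp [finner, Matrix.mul_smul] }

open NormedSpace

namespace Matrix

variable {m : Type*} [Fintype m] [DecidableEq m]

section Exponential

attribute [local instance] Matrix.frobeniusNormedRing Matrix.frobeniusNormedAlgebra

theorem exp_transpose_mul_self_of_transpose_eq_neg {A : Matrix m m ℝ} (hA : Aᵀ = -A) :
    (exp A)ᵀ * exp A = 1 := by
  rw [← exp_transpose, hA, ← exp_add_of_commute _ _ (Commute.refl A).neg_left, neg_add_cancel,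
    exp_zero]

theorem det_exp_of_transpose_eq_neg {A : Matrix m m ℝ} (hA : Aᵀ = -A) : (exp A).det = 1 := by
  have hsq : (exp A).det ^ 2 = 1 := by
    simpa [det_mul, sq] using congrArg det (exp_transpose_mul_self_of_transpose_eq_neg hA)
  -- `exp A` is the square of `exp (A / 2)`, so its determinant is nonnegative.
  have hnonneg : 0 ≤ (exp A).det := by
    have hhalf : A = (2 : ℕ) • ((2⁻¹ : ℝ) • A) := by
      rw [← Nat.cast_smul_eq_nsmul ℝ, smul_smul]; norm_num
    rw [hhalf, exp_nsmul, det_pow]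
    exact sq_nonneg _
  nlinarith

end Exponential

theorem isSymm_of_trace_mul_eq_zero {R : Type*} [CommRing R] {M : Matrix m m R}
    (hM : ∀ A : Matrix m m R, Aᵀ = -A → (M * A).trace = 0) : M.IsSymm := by
  ext i j
  have h := hM (single i j 1 - single j i 1) (by simp [transpose_sub])
  simp only [mul_sub, trace_sub, trace_mul_single, MulOpposite.op_one, one_smul] at h
  exact sub_eq_zero.mp h

theorem IsSymm.inv_mul_of_mul_transpose {R : Type*} [CommRing R] {F G : Matrix m m R}
    (hF : IsUnit F.det) (h : (F * Gᵀ).IsSymm) : (F⁻¹ * G).IsSymm := by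
  have hGt : Gᵀ = F⁻¹ * (F * Gᵀ) := by rw [← mul_assoc, nonsing_inv_mul _ hF, one_mul]
  have hG : G = F * Gᵀ * F⁻¹ᵀ := by
    simpa only [transpose_mul, transpose_transpose, h.eq] using congrArg (·ᵀ) hGt
  set M := F * Gᵀ
  rw [IsSymm, transpose_mul, hGt, hG, mul_assoc]

end Matrix

section

attribute [local instance] Matrix.frobeniusNormedRing Matrix.frobeniusNormedAlgebra

theorem finner_mul_eq_zero_of_rotation_invariant {d : ℕ} {W : Matrix (Fin d) (Fin d) ℝ → ℝ}
    {G F : Matrix (Fin d) (Fin d) ℝ} (hW : HasFDerivAt W (frobCLM G) F)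
    (hinv : ∀ Q : Matrix (Fin d) (Fin d) ℝ, Qᵀ * Q = 1 → Q.det = 1 → W (Q * F) = W F)
    {A : Matrix (Fin d) (Fin d) ℝ} (hA : Aᵀ = -A) : finner G (A * F) = 0 := by
  have hcurve : HasDerivAt (fun t : ℝ => exp (t • A) * F) (A * F) 0 := by
    have h := (hasDerivAt_exp_smul_const' A (0 : ℝ)).mul_const F
    rwa [zero_smul, exp_zero, mul_one] at h
  have hskew (t : ℝ) : (t • A)ᵀ = -(t • A) := by rw [transpose_smul, hA, smul_neg]
  have hconst : (fun t : ℝ => W (exp (t • A) * F)) = fun _ => W F := funext fun t =>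
    hinv _ (exp_transpose_mul_self_of_transpose_eq_neg (hskew t))
      (det_exp_of_transpose_eq_neg (hskew t))
  have hderiv : HasDerivAt (fun t : ℝ => W (exp (t • A) * F)) (frobCLM G (A * F)) 0 :=
    hW.comp_hasDerivAt_of_eq 0 hcurve (by simp)
  rw [hconst] at hderiv
  exact hderiv.unique (hasDerivAt_const 0 (W F))

end

theorem statement0_general {d : ℕ}
    (W : Matrix (Fin d) (Fin d) ℝ → ℝ)
    (DW : Matrix (Fin d) (Fin d) ℝ → Matrix (Fin d) (Fin d) ℝ)
    (hdiff : ∀ F : Matrix (Fin d) (Fin d) ℝ, 0 < F.det → HasFDerivAt W (frobCLM (DW F)) F)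
    (hframe : ∀ F : Matrix (Fin d) (Fin d) ℝ, 0 < F.det →
      ∀ Q : Matrix (Fin d) (Fin d) ℝ, Qᵀ * Q = 1 → Q.det = 1 → W (Q * F) = W F) :
    ∀ F : Matrix (Fin d) (Fin d) ℝ, 0 < F.det → (F⁻¹ * DW F)ᵀ = F⁻¹ * DW F := by
  intro F hF
  refine IsSymm.inv_mul_of_mul_transpose (isUnit_iff_ne_zero.mpr hF.ne') ?_
  refine isSymm_of_trace_mul_eq_zero fun A hA => ?_
  have h := finner_mul_eq_zero_of_rotation_invariant (hdiff F hF) (hframe F hF) hA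
  rwa [finner, ← mul_assoc, trace_mul_comm, ← mul_assoc] at h

/-- If `W` is differentiable on `GL₊(d)` with (Frobenius) gradient `DW`, and `W` is frame
indifferent (`W(QF) = W(F)` for all `Q ∈ SO(d)` and `F ∈ GL₊(d)`), then the second
Piola–Kirchhoff stress tensor `F⁻¹ ∂_F W(F)` is symmetric for every `F ∈ GL₊(d)`. -/
theorem statement0 {d : ℕ} (hd : 1 ≤ d)
    (W : Matrix (Fin d) (Fin d) ℝ → ℝ)
    (DW : Matrix (Fin d) (Fin d) ℝ → Matrix (Fin d) (Fin d) ℝ)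
    (hdiff : ∀ F : Matrix (Fin d) (Fin d) ℝ, 0 < F.det → HasFDerivAt W (frobCLM (DW F)) F)
    (hframe : ∀ F : Matrix (Fin d) (Fin d) ℝ, 0 < F.det →
      ∀ Q : Matrix (Fin d) (Fin d) ℝ, Qᵀ * Q = 1 → Q.det = 1 → W (Q * F) = W F) :
    ∀ F : Matrix (Fin d) (Fin d) ℝ, 0 < F.det → (F⁻¹ * DW F)ᵀ = F⁻¹ * DW F :=
  statement0_general W DW hdiff hframe
end

section
/- Let d ≥ 1, let Y ∈ GL₊(d) and let S ∈ ℝ^{d×d} be such that Y⁻¹S is symmetric, and define f_Y(Z) = S : Z + 2|sym(YᵀZ)|² for Z ∈ ℝ^{d×d}. Then for every Z ∈ ℝ^{d×d} one has f_Y(Z) ≥ 2|sym(YᵀZ)|² − |Y⁻¹S| · |sym(YᵀZ)|; in particular f_Y is bounded from below on ℝ^{d×d}. -/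
open Matrix

/-- Squared Frobenius norm `|A|² = A : A`. -/
noncomputable def fnormSq {d : ℕ} (A : Matrix (Fin d) (Fin d) ℝ) : ℝ := finner A A

/-- Frobenius norm `|A|`. -/
noncomputable def fnorm {d : ℕ} (A : Matrix (Fin d) (Fin d) ℝ) : ℝ := Real.sqrt (fnormSq A)

/-- Symmetric part `sym(M) = (M + Mᵀ)/2`. -/
noncomputable def symPart {d : ℕ} (M : Matrix (Fin d) (Fin d) ℝ) : Matrix (Fin d) (Fin d) ℝ :=
  (1 / 2 : ℝ) • (M + Mᵀ)

lemma finner_eq_sum {d : ℕ} (A B : Matrix (Fin d) (Fin d) ℝ) :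
    finner A B = ∑ i, ∑ j, A j i * B j i := by
  simp [finner, Matrix.trace, Matrix.mul_apply, Matrix.diag]

lemma fnormSq_nonneg {d : ℕ} (A : Matrix (Fin d) (Fin d) ℝ) : 0 ≤ fnormSq A := by
  rw [fnormSq, finner_eq_sum]
  apply Finset.sum_nonneg; intro i _
  apply Finset.sum_nonneg; intro j _
  exact mul_self_nonneg _

lemma finner_cs {d : ℕ} (A B : Matrix (Fin d) (Fin d) ℝ) :
    -(fnorm A * fnorm B) ≤ finner A B := by
  have key : (finner A B) ^ 2 ≤ fnormSq A * fnormSq B := by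
    rw [finner_eq_sum, fnormSq, fnormSq, finner_eq_sum, finner_eq_sum]
    have h := Finset.sum_mul_sq_le_sq_mul_sq Finset.univ
      (fun p : Fin d × Fin d => A p.2 p.1) (fun p : Fin d × Fin d => B p.2 p.1)
    simpa [Fintype.sum_prod_type, sq, mul_comm, mul_assoc, mul_left_comm] using h
  have h1 : |finner A B| ≤ fnorm A * fnorm B := by
    have := Real.sqrt_le_sqrt key
    rwa [Real.sqrt_sq_eq_abs, Real.sqrt_mul (fnormSq_nonneg A)] at this
  linarith [neg_abs_le (finner A B)]

lemma finner_symPart {d : ℕ} (A M : Matrix (Fin d) (Fin d) ℝ) (hA : Aᵀ = A) :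
    finner A (symPart M) = finner A M := by
  unfold finner symPart
  rw [Matrix.mul_smul, Matrix.mul_add, Matrix.trace_smul, Matrix.trace_add]
  have h : (Aᵀ * Mᵀ).trace = (Aᵀ * M).trace := by
    rw [← Matrix.transpose_mul, Matrix.trace_transpose, Matrix.trace_mul_comm, hA]
  rw [h, smul_eq_mul]
  ring

/-- Lower bound `f_Y(Z) ≥ 2|sym(YᵀZ)|² − |Y⁻¹S|·|sym(YᵀZ)|`; in particular `f_Y` is
bounded from below on `ℝ^{d×d}`. -/
theorem statement4 {d : ℕ} (hd : 1 ≤ d)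
    (Y S : Matrix (Fin d) (Fin d) ℝ) (hY : 0 < Y.det)
    (hsym : (Y⁻¹ * S)ᵀ = Y⁻¹ * S)
    (fY : Matrix (Fin d) (Fin d) ℝ → ℝ)
    (hfY : ∀ Z, fY Z = finner S Z + 2 * fnormSq (symPart (Yᵀ * Z))) :
    (∀ Z : Matrix (Fin d) (Fin d) ℝ,
      fY Z ≥ 2 * fnormSq (symPart (Yᵀ * Z))
        - fnorm (Y⁻¹ * S) * fnorm (symPart (Yᵀ * Z))) ∧
    BddBelow (Set.range fY) := by
  have hdet : IsUnit Y.det := isUnit_iff_ne_zero.2 (ne_of_gt hY)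
  have hS : Y * (Y⁻¹ * S) = S := by
    rw [← Matrix.mul_assoc, Matrix.mul_nonsing_inv Y hdet, Matrix.one_mul]
  have key : ∀ Z, finner S Z = finner (Y⁻¹ * S) (symPart (Yᵀ * Z)) := by
    intro Z
    rw [finner_symPart _ _ hsym]
    conv_lhs => rw [← hS]
    simp [finner, Matrix.transpose_mul, Matrix.mul_assoc]
  have main : ∀ Z : Matrix (Fin d) (Fin d) ℝ,
      fY Z ≥ 2 * fnormSq (symPart (Yᵀ * Z))
        - fnorm (Y⁻¹ * S) * fnorm (symPart (Yᵀ * Z)) := by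
    intro Z
    rw [hfY Z, key Z]
    have := finner_cs (Y⁻¹ * S) (symPart (Yᵀ * Z))
    linarith
  refine ⟨main, ⟨-(fnorm (Y⁻¹ * S))^2/8, ?_⟩⟩
  rintro _ ⟨Z, rfl⟩
  have h1 := main Z
  have h2 : fnormSq (symPart (Yᵀ * Z)) = fnorm (symPart (Yᵀ * Z)) ^ 2 := by
    rw [fnorm, Real.sq_sqrt (fnormSq_nonneg _)]
  rw [h2] at h1
  nlinarith [sq_nonneg (fnorm (symPart (Yᵀ * Z)) - fnorm (Y⁻¹ * S) / 4)]
end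

section
/- Let n ≥ 1 and let D : ℝⁿ × ℝⁿ → [0, ∞) be such that D(F, F) = 0 for all F ∈ ℝⁿ and such that the function D² is twice continuously differentiable. Then for every F, Ḟ ∈ ℝⁿ, lim_{ε → 0} (1/(2ε²)) D²(F + εḞ, F) = (1/4) ∂²_{F₁²} D²(F, F)[Ḟ, Ḟ], where ∂²_{F₁²} D²(F₁, F₂) denotes the second derivative (Hessian bilinear form) of D² with respect to its first argument evaluated at (F₁, F₂). -/
/-! Since `X ↦ D(X, F)²` is nonnegative and vanishes at `F`, it has a local minimum there, so its
first derivative vanishes at `F`. Along the line `ε ↦ F + εḞ` the quotient by `ε²` is then a `0/0`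
form; one application of L'Hôpital's rule turns it into a difference quotient of the first
derivative, whose limit is half the second derivative. -/

open Filter Topology

theorem tendsto_div_sq_of_hasDerivAt_of_hasDerivAt {h h' : ℝ → ℝ} {T : ℝ}
    (hh : ∀ᶠ ε in 𝓝 0, HasDerivAt h (h' ε) ε) (hh' : HasDerivAt h' T 0)
    (h0 : h 0 = 0) (h'0 : h' 0 = 0) :
    Tendsto (fun ε => h ε / ε ^ 2) (𝓝[≠] 0) (𝓝 (T / 2)) := by
  have hslope : Tendsto (fun ε => h' ε / (2 * ε)) (𝓝[≠] 0) (𝓝 (T / 2)) := by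
    refine (hh'.tendsto_slope_zero.div_const 2).congr fun ε => ?_
    simp only [zero_add, h'0, sub_zero, smul_eq_mul]
    field_simp
  refine HasDerivAt.lhopital_zero_nhdsNE (hh.filter_mono nhdsWithin_le_nhds)
    (Eventually.of_forall fun ε => by simpa using hasDerivAt_pow 2 ε) ?_ ?_ ?_ hslope
  · filter_upwards [self_mem_nhdsWithin] with ε hε
    exact mul_ne_zero two_ne_zero hε
  · simpa [h0] using hh.self_of_nhds.continuousAt.tendsto.mono_left nhdsWithin_le_nhds
  · simpa using ((continuous_pow 2).tendsto (0 : ℝ)).mono_left nhdsWithin_le_nhds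

section

variable {E : Type*} [NormedAddCommGroup E] [NormedSpace ℝ E] {g : E → ℝ} {x : E}

theorem ContDiffAt.tendsto_div_sq_of_fderiv_eq_zero (hg : ContDiffAt ℝ 2 g x) (hgx : g x = 0)
    (hdg : fderiv ℝ g x = 0) (v : E) :
    Tendsto (fun ε : ℝ => g (x + ε • v) / ε ^ 2) (𝓝[≠] 0)
      (𝓝 (iteratedFDeriv ℝ 2 g x ![v, v] / 2)) := by
  have hline : ∀ ε : ℝ, HasDerivAt (fun ε : ℝ => x + ε • v) v ε := fun ε => by
    simpa using ((hasDerivAt_id ε).smul_const v).const_add x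
  have hline_tendsto : Tendsto (fun ε : ℝ => x + ε • v) (𝓝 0) (𝓝 x) := by
    simpa using ((hline 0).continuousAt.tendsto)
  have hderiv : ∀ᶠ ε in 𝓝 (0 : ℝ),
      HasDerivAt (fun ε => g (x + ε • v)) (fderiv ℝ g (x + ε • v) v) ε := by
    filter_upwards [hline_tendsto.eventually (hg.eventually (by simp))] with ε hε
    exact (hε.differentiableAt two_ne_zero).hasFDerivAt.comp_hasDerivAt ε (hline ε)
  have hsecond : HasDerivAt (fun ε : ℝ => fderiv ℝ g (x + ε • v) v)
      (fderiv ℝ (fderiv ℝ g) x v v) 0 := by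
    have hfd : HasFDerivAt (fderiv ℝ g) (fderiv ℝ (fderiv ℝ g) x) (x + (0 : ℝ) • v) := by
      simpa using ((hg.fderiv_right (m := 1) le_rfl).differentiableAt one_ne_zero).hasFDerivAt
    exact (ContinuousLinearMap.apply ℝ ℝ v).hasFDerivAt.comp_hasDerivAt 0
      (hfd.comp_hasDerivAt 0 (hline 0))
  rw [iteratedFDeriv_two_apply]
  exact tendsto_div_sq_of_hasDerivAt_of_hasDerivAt hderiv hsecond (by simpa using hgx)
    (by simp [hdg])

end

theorem statement7_general {n : ℕ}
    (D : EuclideanSpace ℝ (Fin n) → EuclideanSpace ℝ (Fin n) → ℝ)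
    (hdiag : ∀ F, D F F = 0)
    (hC2 : ContDiff ℝ 2
      (fun p : EuclideanSpace ℝ (Fin n) × EuclideanSpace ℝ (Fin n) => (D p.1 p.2) ^ 2)) :
    ∀ F Fdot : EuclideanSpace ℝ (Fin n),
      Filter.Tendsto (fun ε : ℝ => 1 / (2 * ε ^ 2) * (D (F + ε • Fdot) F) ^ 2)
        (nhdsWithin (0 : ℝ) {0}ᶜ)
        (nhds ((1 / 4) * iteratedFDeriv ℝ 2 (fun X => (D X F) ^ 2) F ![Fdot, Fdot])) := by
  intro F v
  set g : EuclideanSpace ℝ (Fin n) → ℝ := fun X => (D X F) ^ 2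
  have hg : ContDiff ℝ 2 g := hC2.comp (contDiff_id.prodMk contDiff_const)
  have hgF : g F = 0 := by simp [g, hdiag]
  have hmin : IsLocalMin g F := Eventually.of_forall fun X => hgF ▸ sq_nonneg (D X F)
  have hlim := (hg.contDiffAt.tendsto_div_sq_of_fderiv_eq_zero hgF hmin.fderiv_eq_zero v).const_mul
    (1 / 2)
  convert hlim using 2 with ε
  · ring
  · ring

/-- For a nonnegative dissipation distance `D` vanishing on the diagonal with `D²` twice
continuously differentiable, the dissipation potential limit exists:
`lim_{ε→0} (1/(2ε²)) D²(F+εḞ, F) = (1/4) ∂²_{F₁²} D²(F,F)[Ḟ,Ḟ]`. -/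
theorem statement7 {n : ℕ} (hn : 1 ≤ n)
    (D : EuclideanSpace ℝ (Fin n) → EuclideanSpace ℝ (Fin n) → ℝ)
    (hnonneg : ∀ F G, 0 ≤ D F G)
    (hdiag : ∀ F, D F F = 0)
    (hC2 : ContDiff ℝ 2
      (fun p : EuclideanSpace ℝ (Fin n) × EuclideanSpace ℝ (Fin n) => (D p.1 p.2) ^ 2)) :
    ∀ F Fdot : EuclideanSpace ℝ (Fin n),
      Filter.Tendsto (fun ε : ℝ => 1 / (2 * ε ^ 2) * (D (F + ε • Fdot) F) ^ 2)
        (nhdsWithin (0 : ℝ) {0}ᶜ)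
        (nhds ((1 / 4) * iteratedFDeriv ℝ 2 (fun X => (D X F) ^ 2) F ![Fdot, Fdot])) :=
  statement7_general D hdiag hC2
end

section
/- Let Ω ⊂ ℝ³ be a nonempty bounded connected open set, let y : Ω → ℝ³ be twice continuously differentiable with det ∇y(x) > 0 for all x ∈ Ω, and let z : Ω → ℝ³ be twice continuously differentiable. Then sym((∇y(x))ᵀ ∇z(x)) = 0 for all x ∈ Ω if and only if there exist a vector a ∈ ℝ³ and a constant skew-symmetric matrix A ∈ Skew(3) such that z(x) = a + A y(x) for all x ∈ Ω; equivalently, z(x) = a + ω × y(x) for some a, ω ∈ ℝ³. -/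
/-!
Write `∇z = W ∇y` with `W = ∇z (∇y)⁻¹`; the condition `sym(∇yᵀ∇z) = 0` says exactly that `W` is
skew at every point. Differentiating `∇z = W ∇y` and using the symmetry of the second derivatives
of `y` and `z` gives `∂ᵤW (∇y v) = ∂ᵥW (∇y u)`. Each `∂ᵤW` is skew as well, and a trilinear form
that is symmetric in one pair of arguments and antisymmetric in another vanishes, so `∇W = 0`.
On the connected set `Ω`, `W` is therefore a constant skew map `A`, and `∇(z - A y) = 0` gives
`z = a + A y`. The converse is a direct computation, and skew `3 × 3` matrices act as `v ↦ ω × v`.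
-/

open Matrix

/-- Jacobian matrix `(∇y)_{ij} = ∂y_i/∂x_j` of a map `y : ℝ³ → ℝ³`. -/
noncomputable def jac (y : (Fin 3 → ℝ) → (Fin 3 → ℝ)) (x : Fin 3 → ℝ) :
    Matrix (Fin 3) (Fin 3) ℝ :=
  Matrix.of fun i j => fderiv ℝ y x (Pi.single j 1) i

open Filter Topology

lemma eq_zero_of_symm_of_antisymm {α : Type*} (e : α → α → α → ℝ)
    (hsymm : ∀ a b c, e a b c = e b a c) (hanti : ∀ a b c, e a b c = -e a c b) (a b c : α) :
    e a b c = 0 := by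
  -- walking once around the six permutations of `(a, b, c)` flips the sign three times
  linarith [hanti a b c, hsymm a c b, hanti c a b, hsymm c b a, hanti b c a, hsymm b a c]

section Skew

variable {n : ℕ}

def IsSkew (f : (Fin n → ℝ) → Fin n → ℝ) : Prop :=
  ∀ u v, f u ⬝ᵥ v + u ⬝ᵥ f v = 0

lemma Matrix.transpose_eq_neg_iff_isSkew (A : Matrix (Fin n) (Fin n) ℝ) :
    Aᵀ = -A ↔ IsSkew (A *ᵥ ·) := by
  have hdot : ∀ u v, A *ᵥ u ⬝ᵥ v = u ⬝ᵥ Aᵀ *ᵥ v := fun u v => by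
    rw [dotProduct_comm, dotProduct_mulVec, ← mulVec_transpose, dotProduct_comm]
  refine ⟨fun hA u v => by rw [hdot, hA, neg_mulVec, dotProduct_neg, neg_add_cancel], fun h => ?_⟩
  ext i j
  have := h (Pi.single j 1) (Pi.single i 1)
  simp only [mulVec_single_one, single_dotProduct, dotProduct_single, one_mul, mul_one,
    col_apply] at this
  simp only [transpose_apply, neg_apply]
  linarith

lemma symPart_eq_zero_iff (M : Matrix (Fin n) (Fin n) ℝ) : symPart M = 0 ↔ Mᵀ = -M := by
  rw [symPart, smul_eq_zero, eq_neg_iff_add_eq_zero, add_comm]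
  norm_num

lemma symPart_transpose_mul_eq_zero_iff (F G : Matrix (Fin n) (Fin n) ℝ) :
    symPart (Fᵀ * G) = 0 ↔ ∀ u v, G *ᵥ u ⬝ᵥ F *ᵥ v + F *ᵥ u ⬝ᵥ G *ᵥ v = 0 := by
  rw [symPart_eq_zero_iff, Matrix.transpose_eq_neg_iff_isSkew]
  refine forall₂_congr fun u v => ?_
  simp only [← mulVec_mulVec, mulVec_transpose, ← dotProduct_mulVec]
  rw [dotProduct_comm u, ← dotProduct_mulVec, dotProduct_comm (G *ᵥ v)]

lemma isSkew_mul_inverse_iff {F G : (Fin n → ℝ) →L[ℝ] (Fin n → ℝ)} (hF : IsUnit F) :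
    IsSkew ⇑(G * Ring.inverse F) ↔ ∀ u v, G u ⬝ᵥ F v + F u ⬝ᵥ G v = 0 := by
  have hcancel : ∀ u, (G * Ring.inverse F) (F u) = G u :=
    DFunLike.congr_fun (Ring.inverse_mul_cancel_right F G hF)
  have hsurj : ∀ a, F (Ring.inverse F a) = a := DFunLike.congr_fun (Ring.mul_inverse_cancel F hF)
  refine ⟨fun h u v => by simpa only [hcancel] using h (F u) (F v), fun h a b => ?_⟩
  have := h (Ring.inverse F a) (Ring.inverse F b)
  rwa [hsurj, hsurj] at this

lemma eq_zero_of_isSkew_of_comm {X : Type*} {L : X → (Fin n → ℝ) → Fin n → ℝ}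
    {F : X → Fin n → ℝ} (hF : Function.Surjective F) (hskew : ∀ u, IsSkew (L u))
    (hcomm : ∀ u v, L u (F v) = L v (F u)) (u : X) : L u = 0 := by
  have hzero : ∀ u v w, L u (F v) ⬝ᵥ F w = 0 := eq_zero_of_symm_of_antisymm _
    (fun u v w => by rw [hcomm])
    (fun u v w => by rw [eq_neg_iff_add_eq_zero, ← hskew u (F v) (F w), dotProduct_comm (F v)])
  funext b
  obtain ⟨v, rfl⟩ := hF b
  obtain ⟨w, hw⟩ := hF (L u (F v))
  simpa [← hw, dotProduct_self_eq_zero] using hzero u v w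

end Skew

section Calculus

variable {X Y Z : Type*} [NormedAddCommGroup X] [NormedSpace ℝ X] [NormedAddCommGroup Y]
  [NormedSpace ℝ Y] [NormedAddCommGroup Z] [NormedSpace ℝ Z]

lemma ContDiffAt.hasFDerivAt_fderiv {f : X → Y} {x : X} (hf : ContDiffAt ℝ 2 f x) :
    HasFDerivAt (fderiv ℝ f) (fderiv ℝ (fderiv ℝ f) x) x :=
  ((hf.fderiv_right (m := 1) le_rfl).differentiableAt one_ne_zero).hasFDerivAt

lemma ContinuousLinearMap.comp_eq_zero_of_hasFDerivAt (L : Y →L[ℝ] Z) {W : X → Y}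
    {W' : X →L[ℝ] Y} {x : X} (hW : HasFDerivAt W W' x) (h : ∀ᶠ t in 𝓝 x, L (W t) = 0) :
    L ∘L W' = 0 :=
  (L.hasFDerivAt.comp x hW).unique ((hasFDerivAt_const 0 x).congr_of_eventuallyEq h)

lemma HasFDerivAt.apply_fderiv_comm {y : X → Y} {z : X → Z} {W : X → Y →L[ℝ] Z}
    {W' : X →L[ℝ] Y →L[ℝ] Z} {x : X} (hy : ContDiffAt ℝ 2 y x) (hz : ContDiffAt ℝ 2 z x)
    (hW : HasFDerivAt W W' x) (h : ∀ᶠ t in 𝓝 x, fderiv ℝ z t = (W t).comp (fderiv ℝ y t))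
    (u v : X) : W' u (fderiv ℝ y x v) = W' v (fderiv ℝ y x u) := by
  have hz' := hz.hasFDerivAt_fderiv.unique
    ((hW.clm_comp hy.hasFDerivAt_fderiv).congr_of_eventuallyEq h)
  have second : ∀ u v, fderiv ℝ (fderiv ℝ z) x u v =
      W x (fderiv ℝ (fderiv ℝ y) x u v) + W' u (fderiv ℝ y x v) := fun u v => by
    rw [hz']
    simp
  have := second u v
  rw [(hz.isSymmSndFDerivAt (by simp)).eq, (hy.isSymmSndFDerivAt (by simp)).eq, second v u] at this
  exact (add_left_cancel this).symm

variable {n : ℕ}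

lemma HasFDerivAt.isSkew_apply {W : X → (Fin n → ℝ) →L[ℝ] Fin n → ℝ}
    {W' : X →L[ℝ] (Fin n → ℝ) →L[ℝ] Fin n → ℝ} {x : X} (hW : HasFDerivAt W W' x)
    (h : ∀ᶠ t in 𝓝 x, IsSkew (W t)) (v : X) : IsSkew (W' v) := by
  intro a b
  let skewDefect : ((Fin n → ℝ) →L[ℝ] Fin n → ℝ) →ₗ[ℝ] ℝ :=
    { toFun := fun f => f a ⬝ᵥ b + a ⬝ᵥ f b
      map_add' := fun f g => by
        simp only [FunLike.coe_add, Pi.add_apply, add_dotProduct, dotProduct_add]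
        ring
      map_smul' := fun c f => by
        simp only [FunLike.coe_smul, Pi.smul_apply, smul_dotProduct, dotProduct_smul,
          RingHom.id_apply, smul_add] }
  exact DFunLike.congr_fun (skewDefect.toContinuousLinearMap.comp_eq_zero_of_hasFDerivAt hW
    (h.mono fun t ht => ht a b)) v

end Calculus

section InfinitesimalIsometry

variable {n : ℕ} {Ω : Set (Fin n → ℝ)} {y z : (Fin n → ℝ) → Fin n → ℝ}

/-- `z` is a first-order variation of `y` preserving the metric `∇yᵀ∇y` at `x`. -/
def IsInfinitesimalIsometryAt (y z : (Fin n → ℝ) → Fin n → ℝ) (x : Fin n → ℝ) : Prop :=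
  ∀ u v, fderiv ℝ z x u ⬝ᵥ fderiv ℝ y x v + fderiv ℝ y x u ⬝ᵥ fderiv ℝ z x v = 0

theorem exists_isSkew_eq_add_of_isInfinitesimalIsometryAt (hΩ : IsOpen Ω)
    (hΩc : IsConnected Ω) (hy : ContDiffOn ℝ 2 y Ω) (hz : ContDiffOn ℝ 2 z Ω)
    (hunit : ∀ x ∈ Ω, IsUnit (fderiv ℝ y x)) (hiso : ∀ x ∈ Ω, IsInfinitesimalIsometryAt y z x) :
    ∃ a, ∃ A : (Fin n → ℝ) →L[ℝ] Fin n → ℝ, IsSkew A ∧ ∀ x ∈ Ω, z x = a + A (y x) := by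
  set W := fun x => fderiv ℝ z x * Ring.inverse (fderiv ℝ y x)
  have hy2 : ∀ x ∈ Ω, ContDiffAt ℝ 2 y x := fun x hx => hy.contDiffAt (hΩ.mem_nhds hx)
  have hz2 : ∀ x ∈ Ω, ContDiffAt ℝ 2 z x := fun x hx => hz.contDiffAt (hΩ.mem_nhds hx)
  have hWskew : ∀ x ∈ Ω, IsSkew (W x) := fun x hx =>
    (isSkew_mul_inverse_iff (hunit x hx)).2 (hiso x hx)
  have hWcomp : ∀ x ∈ Ω, fderiv ℝ z x = (W x).comp (fderiv ℝ y x) := fun x hx =>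
    (Ring.inverse_mul_cancel_right _ _ (hunit x hx)).symm
  have hWdiff : ∀ x ∈ Ω, DifferentiableAt ℝ W x := fun x hx =>
    (hz2 x hx).hasFDerivAt_fderiv.differentiableAt.mul <|
      (differentiableAt_inverse (hunit x hx)).comp x (hy2 x hx).hasFDerivAt_fderiv.differentiableAt
  have hW' : ∀ x ∈ Ω, fderiv ℝ W x = 0 := by
    intro x hx
    have hWx := (hWdiff x hx).hasFDerivAt
    have hnhds := hΩ.mem_nhds hx
    ext1 u
    exact DFunLike.coe_injective <| eq_zero_of_isSkew_of_comm
      (ContinuousLinearMap.isUnit_iff_bijective.1 (hunit x hx)).2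
      (hWx.isSkew_apply (eventually_of_mem hnhds hWskew))
      (hWx.apply_fderiv_comm (hy2 x hx) (hz2 x hx) (eventually_of_mem hnhds hWcomp)) u
  obtain ⟨A, hA⟩ := hΩ.exists_is_const_of_fderiv_eq_zero hΩc.isPreconnected
    (fun x hx => (hWdiff x hx).differentiableWithinAt) hW'
  obtain ⟨x₀, hx₀⟩ := hΩc.nonempty
  have hzA : Ω.EqOn (fderiv ℝ z) (fderiv ℝ fun x => A (y x)) := fun x hx => by
    rw [hWcomp x hx, hA x hx]
    exact (A.hasFDerivAt.comp x ((hy2 x hx).differentiableAt two_ne_zero).hasFDerivAt).fderiv.symm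
  obtain ⟨a, ha⟩ := hΩ.exists_eq_add_of_fderiv_eq hΩc.isPreconnected
    (hz.differentiableOn two_ne_zero) (A.differentiable.comp_differentiableOn
      (hy.differentiableOn two_ne_zero)) hzA
  exact ⟨a, A, hA x₀ hx₀ ▸ hWskew x₀ hx₀, fun x hx => (ha hx).trans (add_comm _ _)⟩

theorem isInfinitesimalIsometryAt_of_eq_add_isSkew (hΩ : IsOpen Ω) (hy : DifferentiableOn ℝ y Ω)
    {a : Fin n → ℝ} {A : (Fin n → ℝ) →L[ℝ] Fin n → ℝ} (hA : IsSkew A)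
    (hz : ∀ x ∈ Ω, z x = a + A (y x)) : ∀ x ∈ Ω, IsInfinitesimalIsometryAt y z x := by
  intro x hx u v
  have hzA : fderiv ℝ z x = A.comp (fderiv ℝ y x) :=
    (((A.hasFDerivAt.comp x (hy.differentiableAt (hΩ.mem_nhds hx)).hasFDerivAt).const_add a
      ).congr_of_eventuallyEq (eventually_of_mem (hΩ.mem_nhds hx) hz)).fderiv
  rw [hzA]
  exact hA _ _

theorem forall_isInfinitesimalIsometryAt_iff (hΩ : IsOpen Ω) (hΩc : IsConnected Ω)
    (hy : ContDiffOn ℝ 2 y Ω) (hz : ContDiffOn ℝ 2 z Ω) (hunit : ∀ x ∈ Ω, IsUnit (fderiv ℝ y x)) :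
    (∀ x ∈ Ω, IsInfinitesimalIsometryAt y z x) ↔
    ∃ a, ∃ A : Matrix (Fin n) (Fin n) ℝ, Aᵀ = -A ∧ ∀ x ∈ Ω, z x = a + A *ᵥ y x := by
  constructor
  · intro hiso
    obtain ⟨a, A, hA, hzA⟩ :=
      exists_isSkew_eq_add_of_isInfinitesimalIsometryAt hΩ hΩc hy hz hunit hiso
    refine ⟨a, LinearMap.toMatrix' (A : (Fin n → ℝ) →ₗ[ℝ] Fin n → ℝ), ?_, ?_⟩
    · rw [transpose_eq_neg_iff_isSkew]
      simpa only [LinearMap.toMatrix'_mulVec, ContinuousLinearMap.coe_coe] using hA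
    · simpa only [LinearMap.toMatrix'_mulVec, ContinuousLinearMap.coe_coe] using hzA
  · rintro ⟨a, A, hA, hzA⟩
    exact isInfinitesimalIsometryAt_of_eq_add_isSkew hΩ (hy.differentiableOn two_ne_zero)
      (A := (Matrix.toLin' A).toContinuousLinearMap) ((transpose_eq_neg_iff_isSkew A).1 hA) hzA

end InfinitesimalIsometry

lemma jac_eq_toMatrix' (f : (Fin 3 → ℝ) → Fin 3 → ℝ) (x : Fin 3 → ℝ) :
    jac f x = LinearMap.toMatrix' (fderiv ℝ f x : (Fin 3 → ℝ) →ₗ[ℝ] Fin 3 → ℝ) := by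
  ext i j
  simp [jac, LinearMap.toMatrix'_apply]

lemma jac_mulVec (f : (Fin 3 → ℝ) → Fin 3 → ℝ) (x v : Fin 3 → ℝ) :
    jac f x *ᵥ v = fderiv ℝ f x v := by
  rw [jac_eq_toMatrix', LinearMap.toMatrix'_mulVec, ContinuousLinearMap.coe_coe]

lemma symPart_jac_eq_zero_iff (y z : (Fin 3 → ℝ) → Fin 3 → ℝ) (x : Fin 3 → ℝ) :
    symPart ((jac y x)ᵀ * jac z x) = 0 ↔ IsInfinitesimalIsometryAt y z x := by
  simp only [symPart_transpose_mul_eq_zero_iff, jac_mulVec, IsInfinitesimalIsometryAt]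

lemma isUnit_fderiv_of_det_jac_ne_zero {f : (Fin 3 → ℝ) → Fin 3 → ℝ} {x : Fin 3 → ℝ}
    (h : (jac f x).det ≠ 0) : IsUnit (fderiv ℝ f x) := by
  rw [ContinuousLinearMap.isUnit_iff_isUnit_toLinearMap, LinearMap.isUnit_iff_isUnit_det,
    ← LinearMap.det_toMatrix', ← jac_eq_toMatrix']
  exact h.isUnit

lemma isSkew_cross (ω : Fin 3 → ℝ) : IsSkew (ω ⨯₃ ·) := fun u v => by
  rw [dotProduct_comm, triple_product_permutation, triple_product_permutation u, ← cross_anticomm,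
    dotProduct_neg, neg_add_cancel]

lemma eq_toMatrix'_crossProduct {A : Matrix (Fin 3) (Fin 3) ℝ} (hA : Aᵀ = -A) :
    A = LinearMap.toMatrix' (crossProduct ![A 2 1, A 0 2, A 1 0]) := by
  have h : ∀ i j, A j i = -A i j := fun i j => congrFun (congrFun hA i) j
  ext i j
  fin_cases i <;> fin_cases j <;> simp [LinearMap.toMatrix'_apply, cross_apply] <;>
    linarith [h 0 0, h 1 1, h 2 2, h 0 1, h 0 2, h 1 2]

lemma exists_transpose_eq_neg_iff_exists_cross {P : ((Fin 3 → ℝ) → Fin 3 → ℝ) → Prop} :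
    (∃ A : Matrix (Fin 3) (Fin 3) ℝ, Aᵀ = -A ∧ P (A *ᵥ ·)) ↔ ∃ ω, P (ω ⨯₃ ·) := by
  constructor
  · rintro ⟨A, hA, hP⟩
    rw [eq_toMatrix'_crossProduct hA] at hP
    exact ⟨_, by simpa only [LinearMap.toMatrix'_mulVec] using hP⟩
  · rintro ⟨ω, hP⟩
    refine ⟨LinearMap.toMatrix' (crossProduct ω), ?_, by simpa only [LinearMap.toMatrix'_mulVec]⟩
    rw [transpose_eq_neg_iff_isSkew]
    simpa only [LinearMap.toMatrix'_mulVec] using isSkew_cross ω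

theorem statement11_general (Ω : Set (Fin 3 → ℝ)) (hopen : IsOpen Ω)
    (hconn : IsConnected Ω)
    (y z : (Fin 3 → ℝ) → (Fin 3 → ℝ))
    (hy : ContDiffOn ℝ 2 y Ω) (hz : ContDiffOn ℝ 2 z Ω)
    (hdet : ∀ x ∈ Ω, 0 < (jac y x).det) :
    ((∀ x ∈ Ω, symPart ((jac y x)ᵀ * jac z x) = 0) ↔
      ∃ (a : Fin 3 → ℝ) (A : Matrix (Fin 3) (Fin 3) ℝ), Aᵀ = -A ∧
        ∀ x ∈ Ω, z x = a + A.mulVec (y x)) ∧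
    ((∀ x ∈ Ω, symPart ((jac y x)ᵀ * jac z x) = 0) ↔
      ∃ a ω : Fin 3 → ℝ, ∀ x ∈ Ω, z x = a + crossProduct ω (y x)) := by
  have hunit : ∀ x ∈ Ω, IsUnit (fderiv ℝ y x) := fun x hx =>
    isUnit_fderiv_of_det_jac_ne_zero (hdet x hx).ne'
  have hiff : (∀ x ∈ Ω, symPart ((jac y x)ᵀ * jac z x) = 0) ↔
      ∃ (a : Fin 3 → ℝ) (A : Matrix (Fin 3) (Fin 3) ℝ), Aᵀ = -A ∧
        ∀ x ∈ Ω, z x = a + A.mulVec (y x) := by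
    simp only [symPart_jac_eq_zero_iff]
    exact forall_isInfinitesimalIsometryAt_iff hopen hconn hy hz hunit
  exact ⟨hiff, hiff.trans <| exists_congr fun a =>
    exists_transpose_eq_neg_iff_exists_cross (P := fun f => ∀ x ∈ Ω, z x = a + f (y x))⟩

/-- Characterization of the kernel of the linearized dissipation: for `y ∈ C²` with
`det ∇y > 0` on a bounded connected open `Ω ⊂ ℝ³` and `z ∈ C²`, `sym(∇yᵀ∇z) = 0` on `Ω`
iff `z = a + A y` on `Ω` for constants `a ∈ ℝ³`, `A ∈ Skew(3)`; equivalently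
`z = a + ω × y` for some `a, ω ∈ ℝ³`. -/
theorem statement11 (Ω : Set (Fin 3 → ℝ)) (hne : Ω.Nonempty) (hopen : IsOpen Ω)
    (hconn : IsConnected Ω) (hbdd : Bornology.IsBounded Ω)
    (y z : (Fin 3 → ℝ) → (Fin 3 → ℝ))
    (hy : ContDiffOn ℝ 2 y Ω) (hz : ContDiffOn ℝ 2 z Ω)
    (hdet : ∀ x ∈ Ω, 0 < (jac y x).det) :
    ((∀ x ∈ Ω, symPart ((jac y x)ᵀ * jac z x) = 0) ↔
      ∃ (a : Fin 3 → ℝ) (A : Matrix (Fin 3) (Fin 3) ℝ), Aᵀ = -A ∧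
        ∀ x ∈ Ω, z x = a + A.mulVec (y x)) ∧
    ((∀ x ∈ Ω, symPart ((jac y x)ᵀ * jac z x) = 0) ↔
      ∃ a ω : Fin 3 → ℝ, ∀ x ∈ Ω, z x = a + crossProduct ω (y x)) :=
  statement11_general Ω hopen hconn y z hy hz hdet
end
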